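/- Let P be an n-element poset. A labeling L of P is in the image of the extended promotion map ∂ : Λ(P) → Λ(P) (where Λ(P) is the set of all labelings of P) if and only if L⁻¹(n) is a maximal element of P. -/

import Mathlib

open scoped Classical

noncomputable section

abbrev Labeling (P : Type*) [Fintype P] : Type _ := P ≃ Fin (Fintype.card P)

variable {P : Type*} [Fintype P] [PartialOrder P]

def IsLinearExt (L : Labeling P) : Prop := ∀ x y : P, x ≤ y → L x ≤ L y

def lSucc (L : Labeling P) (v : P)
    (h : (Finset.univ.filter fun y => v < y).Nonempty) : P :=
  L.symm (((Finset.univ.filter fun y => v < y).image L).min' (h.image _))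

lemma lt_lSucc (L : Labeling P) (v : P)
    (h : (Finset.univ.filter fun y => v < y).Nonempty) : v < lSucc L v h := by
  have hmem := Finset.min'_mem ((Finset.univ.filter fun y => v < y).image L) (h.image _)
  obtain ⟨y, hy, hLy⟩ := Finset.mem_image.mp hmem
  have heq : lSucc L v h = y := by
    unfold lSucc
    rw [← hLy, Equiv.symm_apply_apply]
  rw [heq]
  exact (Finset.mem_filter.mp hy).2

def promChainFrom (L : Labeling P) (v : P) : List P :=
  if h : (Finset.univ.filter fun y => v < y).Nonempty then
    v :: promChainFrom L (lSucc L v h)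
  else [v]
termination_by (Finset.univ.filter fun y => v < y).card
decreasing_by
  apply Finset.card_lt_card
  refine (Finset.ssubset_iff_of_subset ?_).mpr ?_
  · intro z hz
    simp only [Finset.mem_filter, Finset.mem_univ, true_and] at *
    exact lt_trans (lt_lSucc L v h) hz
  · exact ⟨lSucc L v h, by simp [lt_lSucc L v h], by simp⟩

def promote (L : Labeling P) : Labeling P :=
  if h : Nonempty P then
    ((List.formPerm (promChainFrom L (L.symm ⟨0, @Fintype.card_pos P _ h⟩))).trans L).trans
      (finRotate (Fintype.card P)).symm
  else L

/-- The label of `x` under `L`, as an integer in `{1, …, n}`. -/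
def labelOf (L : Labeling P) (x : P) : ℕ := (L x : ℕ) + 1

/-- The largest `a ∈ {0, …, n}` such that for all `j ∈ {n−a+1, …, n}`, the set
`{x ∈ P : j ≤ L(x) ≤ n}` is an upper order ideal of `P`. -/
def frozenA (L : Labeling P) : ℕ :=
  sSup {a : ℕ | a ≤ Fintype.card P ∧
    ∀ j, Fintype.card P - a + 1 ≤ j → j ≤ Fintype.card P →
      IsUpperSet {x : P | j ≤ labelOf L x ∧ labelOf L x ≤ Fintype.card P}}

/-- `x` is frozen with respect to `L` if `n − a + 1 ≤ L(x) ≤ n`, where `a` is as in `frozenA`. -/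
def IsFrozen (L : Labeling P) (x : P) : Prop :=
  Fintype.card P - frozenA L + 1 ≤ labelOf L x

/-- A labeling of an `n`-element poset is tangled if `n ≥ 2` and `∂^{n−2}(L)` is
not a linear extension. -/
def IsTangled (L : Labeling P) : Prop :=
  2 ≤ Fintype.card P ∧ ¬ IsLinearExt (promote^[Fintype.card P - 2] L)

/-- A labeling of an `n`-element poset is `k`-untangled if `n ≥ k + 2` and
`∂^{n−k−2}(L)` is not a linear extension. -/
def IsUntangled (k : ℕ) (L : Labeling P) : Prop :=
  k + 2 ≤ Fintype.card P ∧ ¬ IsLinearExt (promote^[Fintype.card P - k - 2] L)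

/-- The comparability graph of a poset. -/
def compGraph (P : Type*) [PartialOrder P] : SimpleGraph P where
  Adj x y := x ≠ y ∧ (x ≤ y ∨ y ≤ x)
  symm := by
    refine ⟨fun x y hxy => ?_⟩
    exact ⟨hxy.1.symm, hxy.2.symm⟩
  loopless := by
    refine ⟨fun x hx => ?_⟩
    exact hx.1 rfl

/-- The standardization of an injective map from a finite type into a linear order:
the unique relabeling by `{1, …, n}` with the same relative order of values. -/
def standardize {R β : Type*} [Fintype R] [LinearOrder β]
    (f : R → β) (hf : Function.Injective f) : R ≃ Fin (Fintype.card R) :=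
  have hcard : (Finset.univ.image f).card = Fintype.card R := by
    rw [Finset.card_image_of_injective _ hf, Finset.card_univ]
  (Equiv.ofBijective (fun x => (⟨f x, by simp⟩ : ↥(Finset.univ.image f)))
    (by
      rw [Fintype.bijective_iff_injective_and_card]
      refine ⟨fun a b hab => hf (congrArg Subtype.val hab), ?_⟩
      rw [Fintype.card_coe, hcard])).trans
    ((Finset.univ.image f).orderIsoOfFin hcard).symm.toEquiv

/-- The toggle operator `τ_{k+1}`: it swaps the labels `k+1` and `k+2` (i.e. the
`Fin`-labels `k` and `k+1`) unless `L⁻¹(k+1) <_P L⁻¹(k+2)`. -/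
def toggle (L : Labeling P) (k : ℕ) : Labeling P :=
  if h : k + 1 < Fintype.card P then
    if L.symm ⟨k, Nat.lt_of_succ_lt h⟩ < L.symm ⟨k + 1, h⟩ then L
    else L.trans (Equiv.swap ⟨k, Nat.lt_of_succ_lt h⟩ ⟨k + 1, h⟩)
  else L

/-- An element `x` is `L`-golden if every element strictly above it has a larger label. -/
def IsGolden (L : Labeling P) (x : P) : Prop := ∀ y : P, x < y → L x < L y

/-- The largest label `n` of an `n`-element poset, as an element of `Fin n`. -/
def topFin (P : Type*) [Fintype P] [Nonempty P] : Fin (Fintype.card P) :=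
  ⟨Fintype.card P - 1, Nat.sub_lt Fintype.card_pos Nat.one_pos⟩

/-
A promotion chain ends at a maximal element, and `∂` gives that element the label `n`;
so `∂(L)⁻¹(n)` is always maximal. Conversely, if `L⁻¹(n)` is maximal, then after cyclically
shifting the labels of `L` by one (so that `L⁻¹(n)` receives the label `1`) the promotion
chain is just that single element, and `∂` undoes the shift.
-/

lemma finRotate_mk_pred (n : ℕ) (hn : 0 < n) :
    finRotate n ⟨n - 1, Nat.sub_one_lt_of_lt hn⟩ = ⟨0, hn⟩ := by
  obtain ⟨m, rfl⟩ : ∃ m, n = m + 1 := ⟨n - 1, by omega⟩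
  exact finRotate_last'

lemma finRotate_topFin (Q : Type*) [Fintype Q] [Nonempty Q] :
    finRotate (Fintype.card Q) (topFin Q) = ⟨0, Fintype.card_pos⟩ :=
  finRotate_mk_pred _ Fintype.card_pos

lemma promChainFrom_eq_cons (L : Labeling P) (v : P) :
    ∃ t, promChainFrom L v = v :: t := by
  rw [promChainFrom]
  split <;> exact ⟨_, rfl⟩

lemma promChainFrom_of_isMax (L : Labeling P) {v : P} (hv : IsMax v) :
    promChainFrom L v = [v] := by
  rw [promChainFrom, dif_neg]
  rintro ⟨y, hy⟩
  exact (Finset.mem_filter.mp hy).2.not_isMax hv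

lemma isMax_of_getLast?_promChainFrom (L : Labeling P) (v : P) :
    ∀ m ∈ (promChainFrom L v).getLast?, IsMax m := by
  induction v using promChainFrom.induct (L := L) with
  | case1 v hv ih =>
    intro m hm
    rw [promChainFrom, dif_pos hv] at hm
    obtain ⟨t, ht⟩ := promChainFrom_eq_cons L (lSucc L v hv)
    rw [ht, List.getLast?_cons_cons, ← ht] at hm
    exact ih m hm
  | case2 v hv =>
    intro m hm
    rw [promChainFrom, dif_neg hv, List.getLast?_singleton, Option.mem_some_iff] at hm
    subst hm
    intro b hvb
    by_contra hbv
    exact hv ⟨b, Finset.mem_filter.mpr ⟨Finset.mem_univ _, lt_of_le_not_ge hvb hbv⟩⟩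

lemma isMax_promote_symm_topFin [Nonempty P] (L : Labeling P) :
    IsMax ((promote L).symm (topFin P)) := by
  rw [promote, dif_pos ‹_›]
  simp only [Equiv.symm_trans_apply, Equiv.symm_symm, finRotate_topFin]
  set v := L.symm ⟨0, Fintype.card_pos⟩
  obtain ⟨t, ht⟩ := promChainFrom_eq_cons L v
  have hlast : (List.formPerm (promChainFrom L v)).symm v =
      (v :: t).getLast (List.cons_ne_nil _ _) := by
    rw [ht, Equiv.symm_apply_eq, List.formPerm_apply_getLast]
  rw [hlast]
  apply isMax_of_getLast?_promChainFrom L v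
  rw [ht, List.getLast?_eq_some_getLast (List.cons_ne_nil _ _)]
  rfl

lemma promote_trans_finRotate [Nonempty P] {L : Labeling P}
    (hL : IsMax (L.symm (topFin P))) :
    promote (L.trans (finRotate (Fintype.card P))) = L := by
  have hfirst : (L.trans (finRotate _)).symm ⟨0, Fintype.card_pos⟩ = L.symm (topFin P) := by
    rw [Equiv.symm_trans_apply, ← finRotate_topFin P, Equiv.symm_apply_apply]
  rw [promote, dif_pos ‹_›, hfirst, promChainFrom_of_isMax _ hL, List.formPerm_singleton]
  ext x
  simp

/-- A labeling `L` of `P` is in the image of extended promotion if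
and only if `L⁻¹(n)` is a maximal element of `P`. -/
theorem mem_image_promote_iff [Nonempty P] (L : Labeling P) :
    (∃ L' : Labeling P, promote L' = L) ↔ IsMax (L.symm (topFin P)) := by
  constructor
  · rintro ⟨L', rfl⟩
    exact isMax_promote_symm_topFin L'
  · exact fun hL => ⟨_, promote_trans_finRotate hL⟩

end
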